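/- Let F be a field of characteristic zero, fix a monomial ordering ≺ on F[x_1,...,x_d], and suppose {P_1,...,P_n} ⊂ F[x_1,...,x_d] is a "reverse" reduced basis with respect to ≺. Then T = {lm(P_1),...,lm(P_n)} is the ≺-minimal monomial interpolating basis for the interpolation conditions Δ = δ_0 ∘ {P_1(D),...,P_n(D)}: T is a monomial interpolating basis for Δ and no monomial interpolating basis T' for Δ satisfies T' ≺ T. -/

import Mathlib

open MvPolynomial

/-- The iterated partial derivative operator `D^α = ∂^{α_1}_{x_1} ⋯ ∂^{α_d}_{x_d}`. -/
noncomputable def Dmon (F : Type*) [CommSemiring F] {d : ℕ} (α : Fin d →₀ ℕ) :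
    Module.End F (MvPolynomial (Fin d) F) :=
  ((List.finRange d).map fun i =>
    ((pderiv i : Derivation F (MvPolynomial (Fin d) F) (MvPolynomial (Fin d) F)) :
      MvPolynomial (Fin d) F →ₗ[F] MvPolynomial (Fin d) F) ^ (α i)).prod

/-- The differential operator `P(D) = Σ_α P̂(α) D^α` induced by a polynomial `P`. -/
noncomputable def PD {F : Type*} [Field F] {d : ℕ} (P : MvPolynomial (Fin d) F) :
    Module.End F (MvPolynomial (Fin d) F) :=
  ∑ α ∈ P.support, P.coeff α • Dmon F α

/-- The linear functional `δ₀ ∘ P(D) : g ↦ (P(D) g)(0)`. -/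
noncomputable def delta0PD {F : Type*} [Field F] {d : ℕ} (P : MvPolynomial (Fin d) F) :
    MvPolynomial (Fin d) F →ₗ[F] F :=
  (MvPolynomial.aeval (0 : Fin d → F)).toLinearMap ∘ₗ PD P

/-- `prec` is a monomial ordering: a linear well-ordering of the monomials (identified with
their exponent vectors) that is compatible with multiplication of monomials. -/
structure IsMonomialOrder {d : ℕ} (prec : (Fin d →₀ ℕ) → (Fin d →₀ ℕ) → Prop) : Prop where
  irrefl : ∀ a, ¬ prec a a
  trans : ∀ a b c, prec a b → prec b c → prec a c
  total : ∀ a b, a ≠ b → prec a b ∨ prec b a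
  wf : WellFounded prec
  add_compat : ∀ a b c, prec a b → prec (a + c) (b + c)

/-- `m` is the `prec`-least monomial occurring in `P` with nonzero coefficient,
i.e. `X^m = lm(P)`. -/
def IsLeastMon {F : Type*} [Field F] {d : ℕ} (prec : (Fin d →₀ ℕ) → (Fin d →₀ ℕ) → Prop)
    (P : MvPolynomial (Fin d) F) (m : Fin d →₀ ℕ) : Prop :=
  m ∈ P.support ∧ ∀ m' ∈ P.support, m' ≠ m → prec m m'

/-- `{P_1, ..., P_n}` is a "reverse" reduced basis w.r.t. `prec`: the `P_i` are linearly
independent and `lm(P_i) ∉ Λ{P_j}` for all `i < j`. -/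
def IsRevReducedBasis {F : Type*} [Field F] {d n : ℕ}
    (prec : (Fin d →₀ ℕ) → (Fin d →₀ ℕ) → Prop) (P : Fin n → MvPolynomial (Fin d) F) : Prop :=
  LinearIndependent F P ∧
    ∀ i j : Fin n, i < j → ∀ m, IsLeastMon prec (P i) m → m ∉ (P j).support

/-- The finset of exponent vectors `T` is a monomial interpolating basis for the `n`
interpolation conditions `lam`: `T` has `n` (distinct) elements and for every vector of
values `f` there is a unique `g` in the span of the monomials `X^m`, `m ∈ T`, with
`lam i g = f i` for all `i`. -/
def IsMonIntBasisSet {F : Type*} [Field F] {d n : ℕ}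
    (lam : Fin n → (MvPolynomial (Fin d) F →ₗ[F] F)) (T : Finset (Fin d →₀ ℕ)) : Prop :=
  T.card = n ∧ ∀ f : Fin n → F, ∃! g : MvPolynomial (Fin d) F,
    g ∈ Submodule.span F ((fun m => (monomial m (1 : F) : MvPolynomial (Fin d) F)) ''
        (T : Set (Fin d →₀ ℕ))) ∧ ∀ i, lam i g = f i

/-- `m` is the `prec`-greatest element of the finset `S`. -/
def IsMaxOf {d : ℕ} (prec : (Fin d →₀ ℕ) → (Fin d →₀ ℕ) → Prop)
    (S : Finset (Fin d →₀ ℕ)) (m : Fin d →₀ ℕ) : Prop :=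
  m ∈ S ∧ ∀ m' ∈ S, m' ≠ m → prec m' m

/-- `T' ≺ T` for two finsets of monomials with `T − T' ≠ ∅` and `T' − T ≠ ∅`:
`max_≺ (T' − T) ≺ max_≺ (T − T')`. -/
def SetPrec {d : ℕ} (prec : (Fin d →₀ ℕ) → (Fin d →₀ ℕ) → Prop)
    (T' T : Finset (Fin d →₀ ℕ)) : Prop :=
  ∃ a b, IsMaxOf prec (T' \ T) a ∧ IsMaxOf prec (T \ T') b ∧ prec a b

/-!
On a monomial, `δ₀ ∘ P(D)` reads off one coefficient: `δ₀ ∘ P(D) (X^m) = m! · P̂(m)`, which is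
nonzero in characteristic zero exactly when `X^m` occurs in `P`. So the matrix
`(δ₀ ∘ P_i(D) (X^{β_j}))` is upper triangular with nonzero diagonal, and `T` interpolates.

For minimality, let `b = max (T − T')` and suppose `max (T' − T) ≺ b`. The `P_i` with
`lm(P_i) ⪰ b` contain no monomial below `b`, so on `span T'` their functionals only see the
monomials of `T'` that are `⪰ b`. Those lie in `T` (everything in `T' − T` is `≺ b`) and
differ from `b ∉ T'`, so there are fewer of them than functionals; the functionals would then
be dependent on `span T'`, which is impossible when `T'` interpolates.
-/

namespace MvPolynomial

variable {R σ : Type*} [CommSemiring R]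

theorem pderiv_pow_monomial (i : σ) (k : ℕ) (m : σ →₀ ℕ) (c : R) :
    (((pderiv i : Derivation R (MvPolynomial σ R) (MvPolynomial σ R)) :
      MvPolynomial σ R →ₗ[R] MvPolynomial σ R) ^ k) (monomial m c)
      = monomial (m - Finsupp.single i k) (c * (m i).descFactorial k) := by
  induction k with
  | zero => simp
  | succ k ih =>
    rw [pow_succ', Module.End.mul_apply, ih, Derivation.coeFn_coe, pderiv_monomial, tsub_tsub,
      ← Finsupp.single_add, Finsupp.tsub_apply, Finsupp.single_eq_same, Nat.descFactorial_succ]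
    push_cast
    congr 1
    ring

theorem list_prod_pderiv_pow_monomial [DecidableEq σ] (α : σ →₀ ℕ) {l : List σ}
    (hl : l.Nodup) (m : σ →₀ ℕ) (c : R) :
    (l.map fun i => ((pderiv i : Derivation R (MvPolynomial σ R) (MvPolynomial σ R)) :
        MvPolynomial σ R →ₗ[R] MvPolynomial σ R) ^ α i).prod (monomial m c)
      = monomial (m - ∑ i ∈ l.toFinset, Finsupp.single i (α i))
          (c * ∏ i ∈ l.toFinset, ((m i).descFactorial (α i) : R)) := by
  induction l with
  | nil => simp
  | cons i t ih =>
    obtain ⟨hit, ht⟩ := List.nodup_cons.mp hl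
    have hit' : i ∉ t.toFinset := List.mem_toFinset.not.mpr hit
    have hsum_i : (∑ j ∈ t.toFinset, Finsupp.single j (α j)) i = 0 := by
      rw [Finsupp.finsetSum_apply]
      exact Finset.sum_eq_zero fun j hj => Finsupp.single_eq_of_ne (by rintro rfl; exact hit' hj)
    rw [List.map_cons, List.prod_cons, Module.End.mul_apply, ih ht, pderiv_pow_monomial,
      List.toFinset_cons, Finset.sum_insert hit', Finset.prod_insert hit', tsub_tsub, add_comm,
      Finsupp.tsub_apply, hsum_i, Nat.sub_zero]
    congr 1
    ring

end MvPolynomial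

section DifferentialOperators

variable {R : Type*} [CommSemiring R] {d : ℕ}

theorem Dmon_monomial (α m : Fin d →₀ ℕ) (c : R) :
    Dmon R α (monomial m c)
      = monomial (m - α) (c * ∏ i, ((m i).descFactorial (α i) : R)) := by
  rw [Dmon, list_prod_pderiv_pow_monomial α (List.nodup_finRange d), List.toFinset_finRange,
    Finsupp.univ_sum_single]

theorem constantCoeff_Dmon_monomial (α m : Fin d →₀ ℕ) (c : R) :
    constantCoeff (Dmon R α (monomial m c))
      = if α = m then c * ∏ i, ((m i).factorial : R) else 0 := by
  classical
  rw [Dmon_monomial, constantCoeff_monomial]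
  split_ifs with hm hαm hαm
  · subst hαm
    simp [Nat.descFactorial_self]
  · obtain ⟨i, hi⟩ : ∃ i, m i < α i := by
      by_contra! h
      exact hαm (le_antisymm (fun i => h i) (tsub_eq_zero_iff_le.mp hm))
    rw [Finset.prod_eq_zero (Finset.mem_univ i)
      (by simp [Nat.descFactorial_eq_zero_iff_lt.mpr hi]), mul_zero]
  · exact absurd (by simp [hαm]) hm
  · rfl

end DifferentialOperators

section Functionals

variable {F : Type*} [Field F] {d : ℕ}

theorem delta0PD_monomial (P : MvPolynomial (Fin d) F) (m : Fin d →₀ ℕ) :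
    delta0PD P (monomial m 1) = P.coeff m * ∏ i, ((m i).factorial : F) := by
  classical
  have hterm : ∀ α, constantCoeff (P.coeff α • Dmon F α (monomial m 1))
      = if α = m then P.coeff m * ∏ i, ((m i).factorial : F) else 0 := by
    intro α
    rw [constantCoeff_smul, constantCoeff_Dmon_monomial, smul_eq_mul, one_mul, mul_ite, mul_zero]
    split_ifs with h <;> simp [h]
  rw [delta0PD, LinearMap.comp_apply, AlgHom.toLinearMap_apply, aeval_zero,
    Algebra.algebraMap_self, RingHom.id_apply, PD, LinearMap.sum_apply, map_sum]
  simp only [LinearMap.smul_apply, hterm, Finset.sum_ite_eq']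
  split_ifs with h
  · rfl
  · rw [notMem_support_iff.mp h, zero_mul]

theorem delta0PD_monomial_eq_zero_iff [CharZero F] (P : MvPolynomial (Fin d) F)
    (m : Fin d →₀ ℕ) : delta0PD P (monomial m 1) = 0 ↔ m ∉ P.support := by
  have hfact : ∏ i, ((m i).factorial : F) ≠ 0 :=
    Finset.prod_ne_zero_iff.mpr fun i _ => Nat.cast_ne_zero.mpr (m i).factorial_ne_zero
  rw [delta0PD_monomial, mul_eq_zero, notMem_support_iff, or_iff_left hfact]

end Functionals

section Interpolation

variable {F : Type*} [Field F] {d n : ℕ} {lam : Fin n → (MvPolynomial (Fin d) F →ₗ[F] F)}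

open Finset

theorem isMonIntBasisSet_image_of_isUnit_det {β : Fin n → (Fin d →₀ ℕ)}
    (hβ : Function.Injective β)
    (hdet : IsUnit (Matrix.of fun i j => lam i (monomial (β j) 1)).det) :
    IsMonIntBasisSet lam (univ.image β) := by
  set M : Matrix (Fin n) (Fin n) F := Matrix.of fun i j => lam i (monomial (β j) 1)
  have hM : IsUnit M := (Matrix.isUnit_iff_isUnit_det M).mpr hdet
  set Φ := Fintype.linearCombination F fun j => (monomial (β j) 1 : MvPolynomial (Fin d) F)
  have hspan : Submodule.span F ((fun m => monomial m (1 : F)) '' ↑(univ.image β))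
      = LinearMap.range Φ := by
    rw [Fintype.range_linearCombination, coe_image, coe_univ, Set.image_univ, ← Set.range_comp]
    rfl
  have heval : ∀ c i, lam i (Φ c) = M.mulVec c i := fun c i => by
    simp [Φ, Fintype.linearCombination_apply, M, Matrix.mulVec, dotProduct, mul_comm]
  refine ⟨by rw [card_image_of_injective _ hβ, card_univ, Fintype.card_fin], fun f => ?_⟩
  obtain ⟨c, rfl⟩ := Matrix.mulVec_surjective_iff_isUnit.mpr hM f
  refine ⟨Φ c, ⟨hspan ▸ LinearMap.mem_range_self Φ c, heval c⟩, ?_⟩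
  rintro g ⟨hg, hgf⟩
  rw [hspan] at hg
  obtain ⟨c', rfl⟩ := hg
  exact congrArg Φ <|
    Matrix.mulVec_injective_iff_isUnit.mpr hM (funext fun i => by rw [← heval, hgf])

theorem isMonIntBasisSet_image_of_triangular {β : Fin n → (Fin d →₀ ℕ)}
    (hdiag : ∀ i, lam i (monomial (β i) 1) ≠ 0)
    (htri : ∀ i j, j < i → lam i (monomial (β j) 1) = 0) :
    IsMonIntBasisSet lam (univ.image β) := by
  have hβ : Function.Injective β := by
    intro i j hij
    by_contra hne
    rcases lt_or_gt_of_ne hne with h | h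
    · exact hdiag j (by rw [← hij]; exact htri j i h)
    · exact hdiag i (by rw [hij]; exact htri i j h)
  refine isMonIntBasisSet_image_of_isUnit_det hβ ?_
  have hupper : (Matrix.of fun i j => lam i (monomial (β j) 1)).IsUpperTriangular :=
    fun i j h => htri i j h
  rw [Matrix.det_of_isUpperTriangular hupper]
  exact isUnit_iff_ne_zero.mpr (prod_ne_zero_iff.mpr fun i _ => hdiag i)

theorem IsMonIntBasisSet.linearIndependent_rows {T : Finset (Fin d →₀ ℕ)}
    (hT : IsMonIntBasisSet lam T) :
    LinearIndependent F fun i (m : T) => lam i (monomial (m : Fin d →₀ ℕ) 1) := by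
  rw [Fintype.linearIndependent_iff]
  intro g hg i₀
  obtain ⟨q, ⟨hq, hqf⟩, -⟩ := hT.2 (Pi.single i₀ 1)
  have hker : Submodule.span F ((fun m => monomial m (1 : F)) '' ↑T)
      ≤ LinearMap.ker (∑ i, g i • lam i) := by
    rw [Submodule.span_le]
    rintro _ ⟨m, hm, rfl⟩
    simpa using congrFun hg ⟨m, hm⟩
  simpa [hqf, Pi.single_apply] using hker hq

theorem IsMonIntBasisSet.card_le_of_eval_eq_zero {T : Finset (Fin d →₀ ℕ)}
    (hT : IsMonIntBasisSet lam T) (I : Finset (Fin n)) (U : Finset (Fin d →₀ ℕ))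
    (hvanish : ∀ i ∈ I, ∀ m ∈ T, m ∉ U → lam i (monomial m 1) = 0) :
    #I ≤ #U := by
  have hind :
      LinearIndependent F fun (i : I) (m : U) => lam i (monomial (m : Fin d →₀ ℕ) 1) := by
    rw [Fintype.linearIndependent_iff]
    intro g hg
    refine Fintype.linearIndependent_iff.mp
      (hT.linearIndependent_rows.comp _ Subtype.val_injective) g (funext fun m => ?_)
    by_cases hmU : (m : Fin d →₀ ℕ) ∈ U
    · simpa using congrFun hg ⟨m, hmU⟩
    · simp [hvanish _ (Subtype.prop _) m m.2 hmU]
  simpa using hind.fintype_card_le_finrank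

end Interpolation

section Minimality

variable {F : Type*} [Field F] {d n : ℕ} {prec : (Fin d →₀ ℕ) → (Fin d →₀ ℕ) → Prop}

open Finset

theorem not_setPrec_image_of_isLeastMon (hord : IsMonomialOrder prec)
    {P : Fin n → MvPolynomial (Fin d) F} {β : Fin n → (Fin d →₀ ℕ)}
    (hβ : ∀ i, IsLeastMon prec (P i) (β i)) {T' : Finset (Fin d →₀ ℕ)}
    (hT' : IsMonIntBasisSet (fun i => delta0PD (P i)) T') :
    ¬ SetPrec prec T' (univ.image β) := by
  classical
  rintro ⟨a, b, ⟨-, ha⟩, ⟨hb, -⟩, hab⟩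
  obtain ⟨hbT, hbT'⟩ := mem_sdiff.mp hb
  set I := univ.filter fun i => ¬ prec (β i) b
  have hbI : b ∈ I.image β := by
    obtain ⟨k, -, rfl⟩ := mem_image.mp hbT
    exact mem_image_of_mem β (mem_filter.mpr ⟨mem_univ k, hord.irrefl _⟩)
  have hcard := hT'.card_le_of_eval_eq_zero I ((I.image β).erase b) fun i hi m hm hmU => by
    rw [delta0PD_monomial, notMem_support_iff.mp fun hmP => ?_, zero_mul]
    have hmb : ¬ prec m b := fun hmb => (mem_filter.mp hi).2 <| by
      rcases eq_or_ne m (β i) with rfl | hne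
      exacts [hmb, hord.trans _ _ _ ((hβ i).2 m hmP hne) hmb]
    have hmT : m ∈ univ.image β := by
      by_contra hmT
      rcases eq_or_ne m a with rfl | hne
      exacts [hmb hab, hmb (hord.trans _ _ _ (ha m (mem_sdiff.mpr ⟨hm, hmT⟩) hne) hab)]
    obtain ⟨j, -, rfl⟩ := mem_image.mp hmT
    exact hmU (mem_erase.mpr ⟨fun h => hbT' (h ▸ hm),
      mem_image_of_mem β (mem_filter.mpr ⟨mem_univ j, hmb⟩)⟩)
  have := card_erase_lt_of_mem hbI
  have := card_image_le (s := I) (f := β)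
  omega

end Minimality

/-- If `{P_1, ..., P_n}` is a "reverse" reduced basis w.r.t. `≺` and
`X^{β_i} = lm(P_i)`, then `T = {lm(P_1), ..., lm(P_n)}` is the `≺`-minimal monomial
interpolating basis for `Δ = δ₀ ∘ {P_1(D), ..., P_n(D)}`: it is a monomial interpolating
basis and no monomial interpolating basis `T'` for `Δ` satisfies `T' ≺ T`. -/
theorem revReducedBasis_leastMon_isMinimalMonIntBasis {F : Type*} [Field F] [CharZero F]
    {d n : ℕ}
    (prec : (Fin d →₀ ℕ) → (Fin d →₀ ℕ) → Prop) (hord : IsMonomialOrder prec)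
    (P : Fin n → MvPolynomial (Fin d) F) (hP : IsRevReducedBasis prec P)
    (β : Fin n → (Fin d →₀ ℕ)) (hβ : ∀ i, IsLeastMon prec (P i) (β i)) :
    IsMonIntBasisSet (fun i => delta0PD (P i)) (Finset.image β Finset.univ) ∧
    ∀ T' : Finset (Fin d →₀ ℕ), IsMonIntBasisSet (fun i => delta0PD (P i)) T' →
      ¬ SetPrec prec T' (Finset.image β Finset.univ) := by
  refine ⟨isMonIntBasisSet_image_of_triangular (fun i => ?_) (fun i j hji => ?_),
    fun T' hT' => not_setPrec_image_of_isLeastMon hord hβ hT'⟩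
  · rw [Ne, delta0PD_monomial_eq_zero_iff, not_not]
    exact (hβ i).1
  · exact (delta0PD_monomial_eq_zero_iff _ _).mpr (hP.2 j i hji (β j) (hβ j))
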